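/- There exists a constant d > 0 (depending only on n and a) such that the following holds. Let 𝓜 be a finite set of n×n primitive row-stochastic matrices with strictly positive diagonals and rational entries representable with at most μ bits, with τ(M) < 1/2 for every M ∈ 𝓜; let a ∈ ℚⁿ, let M₁, …, M_T ∈ 𝓜, and let θ = (k₁ < … < k_m) be an increasing sequence in {1,…,T}. If θ contains n+1 indices j₀ < j₁ < … < j_n with j_i ≥ dμ·j_{i−1} for each i ∈ {1,…,n}, then property U holds for θ: there exists a rational vector u ∈ ℚ^m with 𝟙ᵀu = 1 such that xᵀM^{(θ)}u does not depend on x as x ranges over the standard simplex, where M^{(θ)} is the n×m matrix whose i-th column is M₁⋯M_{k_i}·a. -/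

import Mathlib

/-- A matrix is row-stochastic if all its entries are nonnegative
and each row sums to 1. -/
def RowStochastic {n : ℕ} (M : Matrix (Fin n) (Fin n) ℝ) : Prop :=
  (∀ i j, 0 ≤ M i j) ∧ ∀ i, ∑ j, M i j = 1

/-- The coefficient of ergodicity τ(M): half the maximum ℓ₁-distance
between two rows of M. -/
noncomputable def ergCoeff {n : ℕ} (M : Matrix (Fin n) (Fin n) ℝ) : ℝ :=
  (1 / 2) * ⨆ p : Fin n × Fin n, ∑ k, |M p.1 k - M p.2 k|

/-- A matrix is primitive if some positive power of it has all entries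
strictly positive. -/
def IsPrimitive {n : ℕ} (M : Matrix (Fin n) (Fin n) ℝ) : Prop :=
  ∃ m : ℕ, 0 < m ∧ ∀ i j, 0 < (M ^ m) i j

/-- A real number is a rational representable with at most μ bits:
a ratio of integers each of absolute value at most 2^μ. -/
def BitsBounded (μ : ℕ) (x : ℝ) : Prop :=
  ∃ p q : ℤ, q ≠ 0 ∧ |p| ≤ 2 ^ μ ∧ |q| ≤ 2 ^ μ ∧ x = (p : ℝ) / (q : ℝ)

/-- The product M₁⋯M_k, where `M j` denotes M_{j+1}. -/
noncomputable def prodUpTo {n : ℕ} (M : ℕ → Matrix (Fin n) (Fin n) ℝ) (k : ℕ) :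
    Matrix (Fin n) (Fin n) ℝ :=
  (List.ofFn fun j : Fin k => M j).prod

/-- Property U for the sequence θ = (k₁ < … < k_m): there is a rational
vector u with 𝟙ᵀu = 1 such that xᵀM^{(θ)}u does not depend on x ∈ 𝕊,
where the i-th column of M^{(θ)} is M₁⋯M_{k_i}·a. -/
def PropertyU {n m : ℕ} (M : ℕ → Matrix (Fin n) (Fin n) ℝ) (a : Fin n → ℚ)
    (θ : Fin m → ℕ) : Prop :=
  ∃ u : Fin m → ℚ, (∑ i, u i) = 1 ∧
    ∀ x y : Fin n → ℝ, x ∈ stdSimplex ℝ (Fin n) → y ∈ stdSimplex ℝ (Fin n) →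
      (∑ i, (u i : ℝ) *
          (∑ j, x j * (prodUpTo M (θ i)).mulVec (fun l => (a l : ℝ)) j)) =
      (∑ i, (u i : ℝ) *
          (∑ j, y j * (prodUpTo M (θ i)).mulVec (fun l => (a l : ℝ)) j))

/-!
Let `V_l = M₁⋯M_{j_l} a`. Each factor is row-stochastic with `τ < 1/2`, so it at least halves the
oscillation `max - min` of a vector: `V_l` is within `O(2^{-j_l})` of a constant vector. On the
other hand the entries of `V_l` are rationals with denominators at most `2^{μ n² j_l}` (up to the
denominator of `a`). Of the `n + 1` vectors `w_l = (V_l p - V_l q)_{p,q}`, let `w_r` be the first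
one in the span of its predecessors, `w_r = ∑_{l<r} c_l w_l`. Cramer's rule for the Gram matrix of
the predecessors, whose determinant is a nonzero rational with bounded denominator, bounds `|c_l|`
by `|w_r|` times a power of `2^{μ n² j_{r-1}}`; the geometric gap `j_r ≥ d μ j_{r-1}` makes
`∑ |c_l| < 1`. Hence `∑ c_l ≠ 1`, and `(e_r - c) / (1 - ∑ c_l)` is an affine combination of the
`V_l` that is a constant vector.
-/

section

open Finset Matrix
open scoped Nat

theorem mulVec_sub_mulVec_le {ι : Type*} [Fintype ι] (N : Matrix ι ι ℝ) {p q : ι}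
    (hrow : ∑ s, N p s = ∑ s, N q s) {v : ι → ℝ} {γ : ℝ} (hv : ∀ s t, v s - v t ≤ γ) :
    (N *ᵥ v) p - (N *ᵥ v) q ≤ (∑ s, |N p s - N q s|) / 2 * γ := by
  obtain ⟨s₀, -, hs₀⟩ := exists_min_image univ v ⟨p, mem_univ p⟩
  have hsum : ∑ s, (N p s - N q s) = 0 := by rw [sum_sub_distrib, hrow, sub_self]
  -- subtracting the minimum of `v` makes every term `≤ (N p s - N q s)⁺ * γ`
  have hshift : (N *ᵥ v) p - (N *ᵥ v) q = ∑ s, (N p s - N q s) * (v s - v s₀) := by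
    simp only [mulVec, dotProduct, mul_sub, sub_mul, sum_sub_distrib, ← sum_mul, hrow, sub_self,
      sub_zero]
  have hpos : ∀ x : ℝ, max x 0 = (x + |x|) / 2 := fun x => by
    rcases le_total 0 x with h | h
    · rw [max_eq_left h, abs_of_nonneg h]; ring
    · rw [max_eq_right h, abs_of_nonpos h]; ring
  calc (N *ᵥ v) p - (N *ᵥ v) q ≤ ∑ s, max (N p s - N q s) 0 * γ := by
        rw [hshift]
        refine sum_le_sum fun s _ => ?_
        have h0 : 0 ≤ v s - v s₀ := sub_nonneg.mpr (hs₀ s (mem_univ s))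
        exact (mul_le_mul_of_nonneg_right (le_max_left _ _) h0).trans
          (mul_le_mul_of_nonneg_left (hv s s₀) (le_max_right _ _))
    _ = (∑ s, |N p s - N q s|) / 2 * γ := by
        rw [← sum_mul, sum_congr rfl fun s _ => hpos _, ← sum_div, sum_add_distrib, hsum,
          zero_add]

theorem sum_abs_sub_le_two_mul_ergCoeff {n : ℕ} (N : Matrix (Fin n) (Fin n) ℝ) (p q : Fin n) :
    ∑ s, |N p s - N q s| ≤ 2 * ergCoeff N := by
  rw [ergCoeff, ← mul_assoc, show (2 : ℝ) * (1 / 2) = 1 by norm_num, one_mul]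
  exact le_ciSup (f := fun pq : Fin n × Fin n => ∑ s, |N pq.1 s - N pq.2 s|)
    (Set.finite_range _).bddAbove (p, q)

theorem abs_mulVec_sub_mulVec_le {n : ℕ} {N : Matrix (Fin n) (Fin n) ℝ}
    (hrow : ∀ p, ∑ s, N p s = 1) {v : Fin n → ℝ} {γ : ℝ} (hv : ∀ s t, |v s - v t| ≤ γ)
    (p q : Fin n) : |(N *ᵥ v) p - (N *ᵥ v) q| ≤ ergCoeff N * γ := by
  have hγ : 0 ≤ γ := (abs_nonneg _).trans (hv p p)
  have hv' : ∀ s t, v s - v t ≤ γ := fun s t => (le_abs_self _).trans (hv s t)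
  have key : ∀ p q, (N *ᵥ v) p - (N *ᵥ v) q ≤ ergCoeff N * γ := fun p q =>
    (mulVec_sub_mulVec_le N (by rw [hrow, hrow]) hv').trans
      (by gcongr; linarith [sum_abs_sub_le_two_mul_ergCoeff N p q])
  exact abs_sub_le_iff.mpr ⟨key p q, key q p⟩

theorem prodUpTo_succ {n : ℕ} (M : ℕ → Matrix (Fin n) (Fin n) ℝ) (k : ℕ) :
    prodUpTo M (k + 1) = prodUpTo M k * M k := by
  rw [prodUpTo, prodUpTo, List.ofFn_succ', List.prod_concat]
  rfl

theorem abs_prodUpTo_mulVec_sub_le {n : ℕ} (M : ℕ → Matrix (Fin n) (Fin n) ℝ) (k : ℕ)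
    (hrow : ∀ j < k, ∀ p, ∑ s, M j p s = 1) (herg : ∀ j < k, ergCoeff (M j) ≤ 1 / 2)
    {v : Fin n → ℝ} {γ : ℝ} (hv : ∀ s t, |v s - v t| ≤ γ) (p q : Fin n) :
    |(prodUpTo M k *ᵥ v) p - (prodUpTo M k *ᵥ v) q| ≤ γ / 2 ^ k := by
  induction k generalizing v γ with
  | zero => simpa [prodUpTo] using hv p q
  | succ k ih =>
    have hγ : 0 ≤ γ := (abs_nonneg _).trans (hv p p)
    have hstep : ∀ s t, |(M k *ᵥ v) s - (M k *ᵥ v) t| ≤ γ / 2 := fun s t =>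
      (abs_mulVec_sub_mulVec_le (hrow k k.lt_succ_self) hv s t).trans
        (by linarith [mul_le_mul_of_nonneg_right (herg k k.lt_succ_self) hγ])
    rw [prodUpTo_succ, ← mulVec_mulVec, pow_succ, mul_comm, ← div_div]
    exact ih (fun j hj => hrow j (by omega)) (fun j hj => herg j (by omega)) hstep

theorem Rat.den_sum_dvd {ι : Type*} (s : Finset ι) {f : ι → ℚ} {D : ℕ}
    (h : ∀ i ∈ s, (f i).den ∣ D) : (∑ i ∈ s, f i).den ∣ D :=
  (Rat.den_sum_dvd_lcm_den s f).trans (lcm_dvd h)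

theorem Rat.den_mul_dvd_mul {x y : ℚ} {D E : ℕ} (hx : x.den ∣ D) (hy : y.den ∣ E) :
    (x * y).den ∣ D * E :=
  (Rat.mul_den_dvd x y).trans (mul_dvd_mul hx hy)

theorem exists_intCast_eq_mul_of_den_dvd {q : ℚ} {D : ℕ} (h : q.den ∣ D) :
    ∃ z : ℤ, (D : ℚ) * q = z := by
  obtain ⟨e, rfl⟩ := h
  exact ⟨e * q.num, by push_cast; rw [mul_comm (q.den : ℚ), mul_assoc, Rat.den_mul_eq_num]⟩

theorem Rat.den_sub_dvd {x y : ℚ} {D : ℕ} (hx : x.den ∣ D) (hy : y.den ∣ D) :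
    (x - y).den ∣ D :=
  (Rat.sub_den_dvd_lcm x y).trans (Nat.lcm_dvd hx hy)

theorem den_mul_apply_dvd {l m n : Type*} [Fintype m] {A : Matrix l m ℚ} {B : Matrix m n ℚ}
    {D E : ℕ} (hA : ∀ i k, (A i k).den ∣ D) (hB : ∀ k j, (B k j).den ∣ E) (i : l) (j : n) :
    ((A * B) i j).den ∣ D * E :=
  Rat.den_sum_dvd _ fun k _ => Rat.den_mul_dvd_mul (hA i k) (hB k j)

theorem den_mulVec_dvd {m n : Type*} [Fintype n] {A : Matrix m n ℚ} {v : n → ℚ}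
    {D E : ℕ} (hA : ∀ i k, (A i k).den ∣ D) (hv : ∀ k, (v k).den ∣ E) (i : m) :
    ((A *ᵥ v) i).den ∣ D * E :=
  Rat.den_sum_dvd _ fun k _ => Rat.den_mul_dvd_mul (hA i k) (hv k)

theorem BitsBounded.exists_rat {μ : ℕ} {x : ℝ} (h : BitsBounded μ x) :
    ∃ y : ℚ, (y : ℝ) = x ∧ y.den ≤ 2 ^ μ := by
  obtain ⟨p, q, hq, -, hqμ, rfl⟩ := h
  refine ⟨p / q, by push_cast; rfl, ?_⟩
  have hdvd : (p / q : ℚ).den ∣ q.natAbs := by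
    rw [← Int.natCast_dvd, ← Rat.divInt_eq_div]
    exact Rat.den_dvd p q
  refine (Nat.le_of_dvd (Int.natAbs_pos.mpr hq) hdvd).trans ?_
  exact_mod_cast (Int.natCast_natAbs q).trans_le hqμ

theorem exists_rat_matrix_den_dvd {n μ : ℕ} {N : Matrix (Fin n) (Fin n) ℝ}
    (h : ∀ p q, BitsBounded μ (N p q)) :
    ∃ (R : Matrix (Fin n) (Fin n) ℚ) (e : ℕ), R.map (↑) = N ∧ 0 < e ∧
      e ≤ 2 ^ (μ * (n * n)) ∧ ∀ p q, (R p q).den ∣ e := by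
  choose R hR hRμ using fun p q => (h p q).exists_rat
  refine ⟨Matrix.of R, ∏ p, ∏ q, (R p q).den, ?_, ?_, ?_, ?_⟩
  · ext p q; exact hR p q
  · exact prod_pos fun p _ => prod_pos fun q _ => (R p q).pos
  · calc ∏ p, ∏ q, (R p q).den ≤ ∏ _p : Fin n, (2 ^ μ) ^ n :=
          prod_le_prod' fun p _ => by
            simpa using prod_le_pow_card univ (fun q => (R p q).den) _ fun q _ => hRμ p q
      _ = 2 ^ (μ * (n * n)) := by
          rw [prod_const, card_univ, Fintype.card_fin, ← pow_mul, ← pow_mul]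
  · exact fun p q => (dvd_prod_of_mem (fun q => (R p q).den) (mem_univ q)).trans
      (dvd_prod_of_mem (fun p => ∏ q, (R p q).den) (mem_univ p))

theorem exists_rat_prodUpTo {n μ T : ℕ} (M : ℕ → Matrix (Fin n) (Fin n) ℝ)
    (h : ∀ j < T, ∀ p q, BitsBounded μ (M j p q)) :
    ∃ (P : ℕ → Matrix (Fin n) (Fin n) ℚ) (E : ℕ → ℕ), (∀ k ≤ T, (P k).map (↑) = prodUpTo M k) ∧
      (∀ k, 0 < E k) ∧ (∀ k, E k ≤ 2 ^ (μ * (n * n) * k)) ∧ (∀ k k', k ≤ k' → E k ∣ E k') ∧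
      ∀ k p q, (P k p q).den ∣ E k := by
  have hR : ∀ j, ∃ (R : Matrix (Fin n) (Fin n) ℚ) (e : ℕ), (j < T → R.map (↑) = M j) ∧
      0 < e ∧ e ≤ 2 ^ (μ * (n * n)) ∧ ∀ p q, (R p q).den ∣ e := fun j => by
    by_cases hj : j < T
    · obtain ⟨R, e, hR, he⟩ := exists_rat_matrix_den_dvd (h j hj)
      exact ⟨R, e, fun _ => hR, he⟩
    · exact ⟨0, 1, fun hj' => absurd hj' hj, one_pos, Nat.one_le_two_pow, fun _ _ => by simp⟩
  choose R e hRM he0 heμ hRe using hR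
  obtain ⟨P, hP0, hPsucc⟩ : ∃ P : ℕ → Matrix (Fin n) (Fin n) ℚ,
      P 0 = 1 ∧ ∀ k, P (k + 1) = P k * R k :=
    ⟨fun k => (List.ofFn fun j : Fin k => R j).prod, rfl, fun k => by
      beta_reduce; rw [List.ofFn_succ', List.prod_concat]; rfl⟩
  refine ⟨P, fun k => ∏ j ∈ range k, e j, fun k hk => ?_, fun k => prod_pos fun j _ => he0 j,
    fun k => ?_, fun k k' hk => prod_dvd_prod_of_subset _ _ _ (range_subset_range.mpr hk),
    fun k => ?_⟩
  · induction k with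
    | zero => rw [hP0, prodUpTo, List.ofFn_zero, List.prod_nil, Matrix.map_one _ Rat.cast_zero
        Rat.cast_one]
    | succ k ih =>
      rw [prodUpTo_succ, ← ih (by omega), ← hRM k (by omega), hPsucc]
      ext p q
      simp [Matrix.mul_apply]
  · calc ∏ j ∈ range k, e j ≤ (2 ^ (μ * (n * n))) ^ k := by
          simpa using prod_le_pow_card (range k) e _ fun j _ => heμ j
      _ = 2 ^ (μ * (n * n) * k) := (pow_mul _ _ _).symm
  · induction k with
    | zero => intro p q; rw [hP0, Matrix.one_apply]; split_ifs <;> simp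
    | succ k ih =>
      beta_reduce
      rw [hPsucc, prod_range_succ]
      exact den_mul_apply_dvd ih (hRe k)

theorem sum_extend_zero_smul {ι κ R M : Type*} [Fintype ι] [Fintype κ] [Semiring R]
    [AddCommMonoid M] [Module R M] {e : ι → κ} (he : Function.Injective e) (f : ι → R)
    (g : κ → M) : ∑ k, Function.extend e f 0 k • g k = ∑ i, f i • g (e i) :=
  (Fintype.sum_of_injective e he _ _
    (fun k hk => by
      rw [Function.extend_apply' _ _ _ fun ⟨i, hi⟩ => hk ⟨i, hi⟩, Pi.zero_apply, zero_smul])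
    (fun i => by rw [he.extend_apply])).symm

section LinearAlgebra

variable {K V : Type*} [Field K] [AddCommGroup V] [Module K V]

theorem exists_linearIndependent_castLE_mem_span :
    ∀ {N : ℕ} (w : Fin N → V), ¬ LinearIndependent K w →
      ∃ r : Fin N, LinearIndependent K (fun l : Fin r => w (Fin.castLE Fin.is_le' l)) ∧
        w r ∈ Submodule.span K (Set.range fun l : Fin r => w (Fin.castLE Fin.is_le' l))
  | 0, _, hw => absurd linearIndependent_empty_type hw
  | N + 1, w, hw => by
    by_cases hinit : LinearIndependent K (Fin.init w)
    · rw [← Fin.snoc_init_self w, linearIndependent_finSnoc, not_and_not_right] at hw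
      exact ⟨Fin.last N, hinit, hw hinit⟩
    · obtain ⟨r, hr⟩ := exists_linearIndependent_castLE_mem_span (Fin.init w) hinit
      exact ⟨r.castSucc, hr⟩

theorem exists_sum_eq_one_sum_smul_eq_zero {N : ℕ} (w : Fin N → V)
    (hw : ¬ LinearIndependent K w)
    (hc : ∀ (r : Fin N) (c : Fin r → K),
      LinearIndependent K (fun l : Fin r => w (Fin.castLE Fin.is_le' l)) →
      ∑ l, c l • w (Fin.castLE Fin.is_le' l) = w r → ∑ l, c l ≠ 1) :
    ∃ u : Fin N → K, ∑ t, u t = 1 ∧ ∑ t, u t • w t = 0 := by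
  obtain ⟨r, hli, hspan⟩ := exists_linearIndependent_castLE_mem_span w hw
  obtain ⟨c, hcr⟩ := (Submodule.mem_span_range_iff_exists_fun K).mp hspan
  have hne : 1 - ∑ l, c l ≠ 0 := sub_ne_zero.mpr (hc r c hli hcr).symm
  have hinj : Function.Injective (Fin.castLE (Fin.is_le' (a := r))) := Fin.castLE_injective _
  set c' := Function.extend (Fin.castLE Fin.is_le') c 0
  have hsum : ∑ t, c' t = ∑ l, c l := by
    simpa using sum_extend_zero_smul hinj c fun _ => (1 : K)
  have hsum_smul : ∑ t, c' t • w t = w r := (sum_extend_zero_smul hinj c w).trans hcr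
  refine ⟨fun t => (1 - ∑ l, c l)⁻¹ * ((Pi.single r 1 : Fin N → K) t - c' t), ?_, ?_⟩
  · rw [← mul_sum, sum_sub_distrib, sum_pi_single', hsum,
      if_pos (mem_univ _), inv_mul_cancel₀ hne]
  · simp_rw [mul_smul, ← smul_sum, sub_smul, sum_sub_distrib, hsum_smul]
    simp [Pi.single_apply]

end LinearAlgebra

theorem abs_sum_mul_le {R ι : Type*} [CommRing R] [LinearOrder R] [IsStrictOrderedRing R]
    [Fintype ι] {x y : ι → R} {X Y : R} (hx : ∀ k, |x k| ≤ X) (hy : ∀ k, |y k| ≤ Y) :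
    |∑ k, x k * y k| ≤ Fintype.card ι * (X * Y) := by
  calc |∑ k, x k * y k| ≤ ∑ k, |x k * y k| := abs_sum_le_sum_abs _ _
    _ ≤ ∑ _k : ι, X * Y := sum_le_sum fun k _ => by
        rw [abs_mul]
        exact mul_le_mul (hx k) (hy k) (abs_nonneg _) ((abs_nonneg _).trans (hx k))
    _ = Fintype.card ι * (X * Y) := by rw [sum_const, card_univ, nsmul_eq_mul]

/-- `D • A` is an integer matrix, so `D ^ (2r) * det (A Aᵀ)` is a nonzero integer. -/
theorem one_le_pow_mul_abs_det_mul_transpose {ι : Type*} [Fintype ι] {r D : ℕ}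
    (A : Matrix (Fin r) ι ℚ) (hdet : (A * Aᵀ).det ≠ 0) (hD : D ≠ 0)
    (hden : ∀ l k, (A l k).den ∣ D) :
    1 ≤ (D : ℚ) ^ (2 * r) * |(A * Aᵀ).det| := by
  choose z hz using fun l k => exists_intCast_eq_mul_of_den_dvd (hden l k)
  set Z : Matrix (Fin r) ι ℤ := Matrix.of z
  have hmap : (Int.castRingHom ℚ).mapMatrix (Z * Zᵀ) = ((D : ℚ) ^ 2) • (A * Aᵀ) := by
    ext p q
    simp only [RingHom.mapMatrix_apply, map_apply, mul_apply, transpose_apply, Matrix.smul_apply,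
      smul_eq_mul, Int.coe_castRingHom, Int.cast_sum, Int.cast_mul, mul_sum, Z, of_apply,
      ← hz]
    exact sum_congr rfl fun k _ => by ring
  have hcast : (((Z * Zᵀ).det : ℤ) : ℚ) = (D : ℚ) ^ (2 * r) * (A * Aᵀ).det := by
    rw [← eq_intCast (Int.castRingHom ℚ), RingHom.map_det, hmap, det_smul, Fintype.card_fin,
      ← pow_mul]
  have hZ : (Z * Zᵀ).det ≠ 0 := by
    rintro h
    rw [h, Int.cast_zero, eq_comm, mul_eq_zero] at hcast
    exact hcast.elim (pow_ne_zero _ (Nat.cast_ne_zero.mpr hD)) hdet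
  calc (1 : ℚ) ≤ |(((Z * Zᵀ).det : ℤ) : ℚ)| := by exact_mod_cast Int.one_le_abs hZ
    _ = _ := by rw [hcast, abs_mul, abs_of_nonneg (by positivity)]

theorem abs_le_of_sum_smul_eq {ι : Type*} [Fintype ι] {r D : ℕ} {g : Fin r → ι → ℚ}
    (hg : LinearIndependent ℚ g) (hD : D ≠ 0) (hden : ∀ l k, (g l k).den ∣ D)
    {B ε : ℚ} (hB : 1 ≤ B) (hgB : ∀ l k, |g l k| ≤ B) (hε : 0 < ε)
    {c : Fin r → ℚ} {v : ι → ℚ} (hcv : ∑ l, c l • g l = v) (hv : ∀ k, |v k| ≤ ε) (l : Fin r) :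
    |c l| ≤ r ! * (Fintype.card ι * B ^ 2) ^ r * D ^ (2 * r) * ε := by
  set A : Matrix (Fin r) ι ℚ := g
  set G := A * Aᵀ
  have hG : IsUnit G := by
    have := PosDef.mul_conjTranspose_self A (vecMul_injective_iff.mpr hg)
    rw [conjTranspose_eq_transpose_of_trivial] at this
    exact this.isUnit
  have hdet : G.det ≠ 0 := ((isUnit_iff_isUnit_det G).mp hG).ne_zero
  have hGc : G *ᵥ c = A *ᵥ v := by
    rw [← mulVec_mulVec, ← hcv]
    congr 1
    ext k
    simp [mulVec, dotProduct, Finset.sum_apply, mul_comm]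
  have hcramer : G.det * c l = (G.updateCol l (A *ᵥ v)).det := by
    have : G.cramer (A *ᵥ v) = G.det • c :=
      mulVec_injective_iff_isUnit.mpr hG (by rw [mulVec_cramer, mulVec_smul, hGc])
    rw [← cramer_apply, this, Pi.smul_apply, smul_eq_mul]
  have hupd : |(G.updateCol l (A *ᵥ v)).det| ≤ ε * (r ! * (Fintype.card ι * B ^ 2) ^ r) := by
    have hsplit : A *ᵥ v = ε • (A *ᵥ (ε⁻¹ • v)) := by
      rw [mulVec_smul, smul_smul, mul_inv_cancel₀ hε.ne', one_smul]
    have hentry : ∀ p q, |G.updateCol l (A *ᵥ (ε⁻¹ • v)) p q| ≤ Fintype.card ι * B ^ 2 := by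
      intro p q
      rw [updateCol_apply]
      split_ifs
      · refine (abs_sum_mul_le (hgB p) (X := B) (Y := 1) fun k => ?_).trans ?_
        · rw [Pi.smul_apply, smul_eq_mul, abs_mul, abs_inv, abs_of_pos hε]
          exact inv_mul_le_one_of_le₀ (hv k) hε.le
        · gcongr; nlinarith
      · exact (abs_sum_mul_le (hgB p) fun k => hgB q k).trans_eq (by ring)
    rw [hsplit, det_updateCol_smul, abs_mul, abs_of_pos hε]
    gcongr
    simpa using det_le (abv := AbsoluteValue.abs) hentry
  calc |c l| ≤ (D ^ (2 * r) * |G.det|) * |c l| :=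
        le_mul_of_one_le_left (abs_nonneg _) (one_le_pow_mul_abs_det_mul_transpose A hdet hD hden)
    _ = D ^ (2 * r) * |(G.updateCol l (A *ᵥ v)).det| := by rw [mul_assoc, ← abs_mul, hcramer]
    _ ≤ D ^ (2 * r) * (ε * (r ! * (Fintype.card ι * B ^ 2) ^ r)) := by gcongr
    _ = _ := by ring

/-- Its kernel is the line of constant vectors. -/
def pairDiff (K ι : Type*) [CommRing K] : (ι → K) →ₗ[K] (ι × ι → K) where
  toFun v pq := v pq.1 - v pq.2
  map_add' _ _ := by ext; simp only [Pi.add_apply]; ring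
  map_smul' _ _ := by ext; simp only [Pi.smul_apply, smul_eq_mul, RingHom.id_apply]; ring

theorem factorial_mul_pow_le {K : Type*} [Field K] [LinearOrder K] [IsStrictOrderedRing K]
    {r N : ℕ} (hr : r ≤ N) {X Y D : K} (hX : 0 ≤ X) (hXY : X ≤ Y) (hY : 1 ≤ Y) (hD : 1 ≤ D) :
    r * r ! * X ^ r * D ^ (2 * r) ≤ N * N ! * Y ^ N * D ^ (2 * N) := by
  have hfac : (r ! : K) ≤ N ! := by exact_mod_cast Nat.factorial_le hr
  have hXr : X ^ r ≤ Y ^ N := (pow_le_pow_left₀ hX hXY r).trans (pow_le_pow_right₀ hY hr)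
  have hDr : D ^ (2 * r) ≤ D ^ (2 * N) := pow_le_pow_right₀ hD (by omega)
  gcongr

theorem sum_ne_one_of_sum_smul_eq {ι : Type*} [Fintype ι] {r N D : ℕ} (hr : r ≤ N)
    {g : Fin r → ι → ℚ} (hg : LinearIndependent ℚ g) (hD : D ≠ 0) (hden : ∀ l k, (g l k).den ∣ D)
    {B K ε : ℚ} (hB : 1 ≤ B) (hgB : ∀ l k, |g l k| ≤ B) (hε : 0 < ε)
    (hK : Fintype.card ι * B ^ 2 ≤ K) (hK1 : 1 ≤ K) {c : Fin r → ℚ} {v : ι → ℚ}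
    (hcv : ∑ l, c l • g l = v) (hv : ∀ k, |v k| ≤ ε)
    (hsmall : N * N ! * K ^ N * D ^ (2 * N) * ε < 1) : ∑ l, c l ≠ 1 := by
  set X : ℚ := Fintype.card ι * B ^ 2
  refine ne_of_lt ((le_abs_self _).trans_lt ((abs_sum_le_sum_abs _ _).trans_lt ?_))
  calc ∑ l, |c l| ≤ r * r ! * X ^ r * D ^ (2 * r) * ε := by
        refine (sum_le_sum fun l _ =>
          abs_le_of_sum_smul_eq hg hD hden hB hgB hε hcv hv l).trans_eq ?_
        rw [sum_const, card_univ, Fintype.card_fin, nsmul_eq_mul]; ring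
    _ ≤ N * N ! * K ^ N * D ^ (2 * N) * ε := by
        refine mul_le_mul_of_nonneg_right ?_ hε.le
        exact factorial_mul_pow_le hr (by positivity) hK hK1
          (Nat.one_le_cast.mpr (Nat.one_le_iff_ne_zero.mpr hD))
    _ < 1 := hsmall

theorem exists_sum_eq_one_forall_sum_eq {ι : Type*} [Fintype ι] {N : ℕ}
    (hN : Fintype.card ι ≤ N) (V : Fin (N + 1) → ι → ℚ) (D : Fin (N + 1) → ℕ)
    (hD : ∀ l, D l ≠ 0) (hDdvd : ∀ l l', l ≤ l' → D l ∣ D l') (hden : ∀ l k, (V l k).den ∣ D l)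
    (ε : Fin (N + 1) → ℚ) (hε : ∀ l, 0 < ε l) (hosc : ∀ l p q, |V l p - V l q| ≤ ε l)
    {B K : ℚ} (hB : 1 ≤ B) (hεB : ∀ l, ε l ≤ B) (hK : Fintype.card (ι × ι) * B ^ 2 ≤ K)
    (hK1 : 1 ≤ K) (hgap : ∀ i : Fin N, N * N ! * K ^ N * D i.castSucc ^ (2 * N) * ε i.succ < 1) :
    ∃ u : Fin (N + 1) → ℚ, ∑ l, u l = 1 ∧ ∀ p q, ∑ l, u l * V l p = ∑ l, u l * V l q := by
  have hdep : ¬ LinearIndependent ℚ (pairDiff ℚ ι ∘ V) := fun h => by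
    have := h.of_comp.fintype_card_le_finrank
    rw [Module.finrank_fintype_fun_eq_card, Fintype.card_fin] at this
    omega
  obtain ⟨u, hu1, hu0⟩ := exists_sum_eq_one_sum_smul_eq_zero _ hdep fun r c hli hcr => by
    induction r using Fin.cases with
    | zero =>
      rw [sum_eq_zero fun l _ => absurd l.2 (Nat.not_lt_zero _)]
      exact zero_ne_one
    | succ i =>
      have hdvd : ∀ l : Fin i.succ, D (Fin.castLE Fin.is_le' l) ∣ D i.castSucc :=
        fun l => hDdvd _ _ (Fin.le_castSucc_iff.mpr l.2)
      exact sum_ne_one_of_sum_smul_eq i.2 hli (hD _)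
        (fun l _ => Rat.den_sub_dvd ((hden _ _).trans (hdvd l)) ((hden _ _).trans (hdvd l)))
        hB (fun _ _ => (hosc _ _ _).trans (hεB _)) (hε _) hK hK1 hcr (fun _ => hosc _ _ _) (hgap i)
  refine ⟨u, hu1, fun p q => ?_⟩
  have := congrFun hu0 (p, q)
  simp only [Function.comp_apply, ← map_smul, ← map_sum] at this
  simpa [pairDiff, Finset.sum_apply, mul_sub, sub_eq_zero] using this

theorem mul_two_pow_lt_two_pow {C : ℚ} {N s x y : ℕ} (hC : C ≤ N) (hx : 1 ≤ x)
    (h : (s + N) * x ≤ y) : C * 2 ^ (s * x) < 2 ^ y := by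
  have hN : C < 2 ^ (N * x) := hC.trans_lt <| by
    exact_mod_cast Nat.lt_two_pow_self.trans_le (Nat.pow_le_pow_right two_pos (by nlinarith))
  calc C * 2 ^ (s * x) < 2 ^ (N * x) * 2 ^ (s * x) := by gcongr
    _ = 2 ^ ((s + N) * x) := by rw [← pow_add]; ring_nf
    _ ≤ 2 ^ y := pow_le_pow_right₀ one_le_two h

def entryBound {n : ℕ} (a : Fin n → ℚ) : ℚ := 2 * ∑ s, |a s| + 1

def gramBound {n : ℕ} (a : Fin n → ℚ) : ℚ := (n * n : ℕ) * entryBound a ^ 2 + 1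

def coeffConst {n : ℕ} (a : Fin n → ℚ) : ℚ :=
  n * n ! * gramBound a ^ n * entryBound a * (∏ s, (a s).den : ℕ) ^ (2 * n)

/-- The constant `d` of the theorem. -/
def gapConst {n : ℕ} (a : Fin n → ℚ) : ℕ := 2 * n ^ 3 + (⌈coeffConst a⌉₊ + 1)

theorem one_le_entryBound {n : ℕ} (a : Fin n → ℚ) : 1 ≤ entryBound a := by
  unfold entryBound
  linarith [sum_nonneg fun s (_ : s ∈ univ) => abs_nonneg (a s)]

theorem one_le_gramBound {n : ℕ} (a : Fin n → ℚ) : 1 ≤ gramBound a :=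
  le_add_of_nonneg_left (by positivity)

theorem abs_sub_le_entryBound {n : ℕ} (a : Fin n → ℚ) (p q : Fin n) :
    |a p - a q| ≤ entryBound a := by
  have h := fun s => single_le_sum (fun s _ => abs_nonneg (a s)) (mem_univ s)
  unfold entryBound
  linarith [abs_sub (a p) (a q), h p, h q]

theorem mul_pow_mul_div_two_pow_lt_one {n μ J J' E A : ℕ} {S B : ℚ} (hS : 0 ≤ S) (hB : 0 ≤ B)
    (hE : E ≤ 2 ^ (μ * (n * n) * J)) (hJ : 1 ≤ μ * J)
    (hJ' : (2 * n ^ 3 + (⌈S * B * A ^ (2 * n)⌉₊ + 1)) * (μ * J) ≤ J') :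
    S * ((E * A : ℕ) : ℚ) ^ (2 * n) * (B / 2 ^ J') < 1 := by
  have hEA : ((E * A : ℕ) : ℚ) ^ (2 * n) ≤ A ^ (2 * n) * 2 ^ (2 * n ^ 3 * (μ * J)) := by
    have : ((E * A : ℕ) : ℚ) ≤ 2 ^ (μ * (n * n) * J) * A := by push_cast; gcongr; exact_mod_cast hE
    calc ((E * A : ℕ) : ℚ) ^ (2 * n) ≤ (2 ^ (μ * (n * n) * J) * A) ^ (2 * n) := by gcongr
      _ = A ^ (2 * n) * 2 ^ (2 * n ^ 3 * (μ * J)) := by rw [mul_pow, ← pow_mul]; ring_nf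
  have hlt := mul_two_pow_lt_two_pow ((Nat.le_ceil (S * B * A ^ (2 * n))).trans
    (by exact_mod_cast Nat.le_succ _)) hJ hJ'
  rw [mul_div_assoc', div_lt_one (by positivity)]
  calc S * ((E * A : ℕ) : ℚ) ^ (2 * n) * B ≤ S * (A ^ (2 * n) * 2 ^ (2 * n ^ 3 * (μ * J))) * B := by
        gcongr
    _ = S * B * A ^ (2 * n) * 2 ^ (2 * n ^ 3 * (μ * J)) := by ring
    _ < 2 ^ J' := hlt

theorem exists_sum_eq_one_of_geometric {n μ T : ℕ} (a : Fin n → ℚ) (hμ : 1 ≤ μ)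
    (M : ℕ → Matrix (Fin n) (Fin n) ℝ) (hrow : ∀ k < T, ∀ p, ∑ s, M k p s = 1)
    (hbits : ∀ k < T, ∀ p q, BitsBounded μ (M k p q)) (herg : ∀ k < T, ergCoeff (M k) ≤ 1 / 2)
    (j : Fin (n + 1) → ℕ) (hj : Monotone j) (hj1 : ∀ l, 1 ≤ j l) (hjT : ∀ l, j l ≤ T)
    (hgap : ∀ i : Fin n, gapConst a * (μ * j i.castSucc) ≤ j i.succ) :
    ∃ u : Fin (n + 1) → ℚ, ∑ l, u l = 1 ∧ ∀ p q,
      ∑ l, (u l : ℝ) * (prodUpTo M (j l) *ᵥ fun s => (a s : ℝ)) p =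
        ∑ l, (u l : ℝ) * (prodUpTo M (j l) *ᵥ fun s => (a s : ℝ)) q := by
  obtain ⟨P, E, hPM, hE0, hEle, hEdvd, hPden⟩ := exists_rat_prodUpTo M hbits
  set B := entryBound a
  set A := ∏ s, (a s).den
  have hB : 1 ≤ B := one_le_entryBound a
  have hcast : ∀ l p, (prodUpTo M (j l) *ᵥ fun s => (a s : ℝ)) p = ((P (j l) *ᵥ a) p : ℚ) :=
    fun l p => by rw [← hPM _ (hjT l), ← Rat.coe_castHom, RingHom.map_mulVec]; rfl
  have hosc : ∀ l p q, |(P (j l) *ᵥ a) p - (P (j l) *ᵥ a) q| ≤ B / 2 ^ j l := fun l p q => by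
    have := abs_prodUpTo_mulVec_sub_le M (j l) (fun k hk => hrow k (hk.trans_le (hjT l)))
      (fun k hk => herg k (hk.trans_le (hjT l))) (v := fun s => (a s : ℝ)) (γ := (B : ℝ))
      (fun s t => by exact_mod_cast abs_sub_le_entryBound a s t) p q
    rw [hcast, hcast] at this
    exact_mod_cast this
  obtain ⟨u, hu1, hu⟩ := exists_sum_eq_one_forall_sum_eq (by simp) (fun l => P (j l) *ᵥ a)
    (fun l => E (j l) * A) (fun l => (Nat.mul_pos (hE0 _) (prod_pos fun s _ => (a s).pos)).ne')
    (fun l l' h => mul_dvd_mul_right (hEdvd _ _ (hj h)) _)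
    (fun l p => den_mulVec_dvd (hPden _) (fun s => dvd_prod_of_mem (fun s => (a s).den)
      (mem_univ s)) p)
    (fun l => B / 2 ^ j l) (fun l => by positivity) hosc hB
    (fun l => div_le_self (by positivity) (one_le_pow₀ one_le_two)) (K := gramBound a)
    (by simp [gramBound, B]) (one_le_gramBound a)
    (fun i => mul_pow_mul_div_two_pow_lt_one (by have := one_le_gramBound a; positivity)
      (by positivity) (hEle _) (Nat.mul_pos hμ (hj1 _)) (hgap i))
  refine ⟨u, hu1, fun p q => ?_⟩
  simp only [hcast]
  exact_mod_cast hu p q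

theorem sum_mul_eq_of_forall_eq {ι : Type*} [Fintype ι] {c x y : ι → ℝ}
    (hc : ∀ p q, c p = c q) (hx : ∑ k, x k = 1) (hy : ∑ k, y k = 1) :
    ∑ k, x k * c k = ∑ k, y k * c k := by
  have hconst : ∀ k, c k = ∑ q, y q * c q := fun k => by
    rw [sum_congr rfl fun q _ => by rw [hc q k], ← sum_mul, hy, one_mul]
  rw [sum_congr rfl fun k _ => by rw [hconst k], ← sum_mul, hx, one_mul]

theorem propertyU_of_sum_eq_one {n m N : ℕ} {M : ℕ → Matrix (Fin n) (Fin n) ℝ}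
    {a : Fin n → ℚ} {θ : Fin m → ℕ} {t : Fin N → Fin m} (ht : Function.Injective t)
    {u : Fin N → ℚ} (hu : ∑ l, u l = 1)
    (hconst : ∀ p q, ∑ l, (u l : ℝ) * (prodUpTo M (θ (t l)) *ᵥ fun s => (a s : ℝ)) p =
      ∑ l, (u l : ℝ) * (prodUpTo M (θ (t l)) *ᵥ fun s => (a s : ℝ)) q) :
    PropertyU M a θ := by
  set W : Fin m → Fin n → ℝ := fun i => prodUpTo M (θ i) *ᵥ fun s => (a s : ℝ)
  have key : ∀ z : Fin n → ℝ, ∑ i, ((Function.extend t u 0 i : ℚ) : ℝ) * ∑ k, z k * W i k =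
      ∑ k, z k * ∑ l, (u l : ℝ) * W (t l) k := fun z => by
    simp_rw [← Rat.smul_def, sum_extend_zero_smul ht u fun i => ∑ k, z k * W i k,
      Rat.smul_def, mul_sum]
    rw [sum_comm]
    exact sum_congr rfl fun k _ => sum_congr rfl fun l _ => by ring
  have hsum : ∑ i, Function.extend t u 0 i = ∑ l, u l := by
    simpa using sum_extend_zero_smul ht u fun _ => (1 : ℚ)
  refine ⟨Function.extend t u 0, hsum.trans hu, ?_⟩
  intro x y hx hy
  rw [key x, key y]
  exact sum_mul_eq_of_forall_eq hconst hx.2 hy.2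

-- `open Matrix` must not reach the theorem, where `IsPrimitive` would clash with
-- `Matrix.IsPrimitive`.
end

theorem property_U_of_geometric_indices_general {n : ℕ} (a : Fin n → ℚ) :
    ∃ d : ℝ, 0 < d ∧
      ∀ (μ : ℕ), 1 ≤ μ →
      ∀ (𝓜 : Finset (Matrix (Fin n) (Fin n) ℝ)),
        (∀ M ∈ 𝓜, RowStochastic M) →
        (∀ M ∈ 𝓜, IsPrimitive M) →
        (∀ M ∈ 𝓜, ∀ i, 0 < M i i) →
        (∀ M ∈ 𝓜, ∀ i j, BitsBounded μ (M i j)) →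
        (∀ M ∈ 𝓜, ergCoeff M < 1 / 2) →
      ∀ (T : ℕ), 0 < T →
      ∀ (M : ℕ → Matrix (Fin n) (Fin n) ℝ), (∀ j < T, M j ∈ 𝓜) →
      ∀ (m : ℕ) (θ : Fin m → ℕ), StrictMono θ → (∀ i, 1 ≤ θ i ∧ θ i ≤ T) →
        (∃ j : Fin (n + 1) → ℕ,
          (∀ i, ∃ t : Fin m, θ t = j i) ∧ StrictMono j ∧
          ∀ i : Fin n, d * (μ : ℝ) * (j i.castSucc : ℝ) ≤ (j i.succ : ℝ)) →
        PropertyU M a θ := by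
  refine ⟨gapConst a, by unfold gapConst; positivity, ?_⟩
  intro μ hμ 𝓜 hRS _ _ hbits herg T _ M hM m θ _ hθT ⟨j, hjθ, hjmono, hgap⟩
  choose t ht using hjθ
  obtain ⟨u, hu1, hu⟩ := exists_sum_eq_one_of_geometric a hμ M
    (fun k hk => (hRS _ (hM k hk)).2) (fun k hk => hbits _ (hM k hk))
    (fun k hk => (herg _ (hM k hk)).le) j hjmono.monotone
    (fun l => ht l ▸ (hθT _).1) (fun l => ht l ▸ (hθT _).2)
    (fun i => by have := hgap i; rw [mul_assoc] at this; exact_mod_cast this)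
  refine propertyU_of_sum_eq_one (t := t) (fun l l' h => hjmono.injective ?_) hu1 ?_
  · rw [← ht, ← ht, h]
  · simpa only [ht] using hu

/-- Fact 1 of the paper: there is a constant d > 0, depending only on n and a,
such that for matrices M₁,…,M_T drawn from a finite set 𝓜 of primitive
row-stochastic matrices with positive diagonals, μ-bit rational entries and
τ < 1/2, any increasing sequence θ in {1,…,T} that contains n+1 indices
j₀ < j₁ < … < j_n with j_i ≥ dμ·j_{i−1} for each i satisfies property U. -/
theorem property_U_of_geometric_indices {n : ℕ} (hn : 1 ≤ n) (a : Fin n → ℚ) :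
    ∃ d : ℝ, 0 < d ∧
      ∀ (μ : ℕ), 1 ≤ μ →
      ∀ (𝓜 : Finset (Matrix (Fin n) (Fin n) ℝ)),
        (∀ M ∈ 𝓜, RowStochastic M) →
        (∀ M ∈ 𝓜, IsPrimitive M) →
        (∀ M ∈ 𝓜, ∀ i, 0 < M i i) →
        (∀ M ∈ 𝓜, ∀ i j, BitsBounded μ (M i j)) →
        (∀ M ∈ 𝓜, ergCoeff M < 1 / 2) →
      ∀ (T : ℕ), 0 < T →
      ∀ (M : ℕ → Matrix (Fin n) (Fin n) ℝ), (∀ j < T, M j ∈ 𝓜) →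
      ∀ (m : ℕ) (θ : Fin m → ℕ), StrictMono θ → (∀ i, 1 ≤ θ i ∧ θ i ≤ T) →
        (∃ j : Fin (n + 1) → ℕ,
          (∀ i, ∃ t : Fin m, θ t = j i) ∧ StrictMono j ∧
          ∀ i : Fin n, d * (μ : ℝ) * (j i.castSucc : ℝ) ≤ (j i.succ : ℝ)) →
        PropertyU M a θ :=
  property_U_of_geometric_indices_general a
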